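/- arXiv:1605.00204 — 5 statements merged into one kernel-verified Lean document; each statement's English description precedes it below -/
import Mathlib

section
/- For every distortion D with 0 < D ≤ σs², one has E_sep^{ρs}(D) ≤ E_sep^{ρz}(D); that is, the separation scheme exploiting the source correlation never requires more energy than the scheme ignoring it. -/
/-- For every distortion `D` with `0 < D ≤ σs²`, one has
`E_sep^{ρs}(D) ≤ E_sep^{ρz}(D)`. -/
theorem stmt_2 (σs σz ρs : ℝ) (hσs : 0 < σs) (hσz : 0 < σz) (hρs : |ρs| < 1)
    (Esep_s Esep_z : ℝ → ℝ)
    (hEs : ∀ D, Esep_s D =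
      if σs^2 * (1 - |ρs|) < D
      then σz^2 * Real.log (σs^2 * (1 + |ρs|) / (2*D - σs^2 * (1 - |ρs|)))
      else σz^2 * Real.log (σs^4 * (1 - ρs^2) / D^2))
    (hEz : ∀ D, Esep_z D = 2 * σz^2 * Real.log (σs^2 / D)) :
    ∀ D, 0 < D → D ≤ σs^2 → Esep_s D ≤ Esep_z D := by
  intro D hD hDle
  rw [hEs, hEz]
  have hr0 : 0 ≤ |ρs| := abs_nonneg _
  have ha : 0 < σs^2 := by positivity
  have hz2 : 0 < σz^2 := by positivity
  have hρ2 : ρs^2 < 1 := by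
    have := sq_abs ρs
    nlinarith
  have h2 : (2:ℝ) * σz^2 * Real.log (σs^2 / D) = σz^2 * Real.log (σs^4 / D^2) := by
    rw [Real.log_div (by positivity) (by positivity),
        Real.log_div (by positivity) (by positivity)]
    rw [show σs^4 = (σs^2)^2 by ring]
    simp only [Real.log_pow]
    push_cast
    ring
  rw [h2]
  split_ifs with h
  · have hden : 0 < 2*D - σs^2 * (1 - |ρs|) := by nlinarith
    apply mul_le_mul_of_nonneg_left _ hz2.le
    apply Real.log_le_log (by positivity)
    rw [div_le_div_iff₀ hden (by positivity)]
    have hP : 0 ≤ ((1 + |ρs|) * D - σs^2 * (1 - |ρs|)) * (σs^2 - D) := by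
      apply mul_nonneg
      · nlinarith
      · linarith
    nlinarith [mul_nonneg hP ha.le]
  · apply mul_le_mul_of_nonneg_left _ hz2.le
    have h1ρ : 0 < 1 - ρs^2 := by linarith
    apply Real.log_le_log (div_pos (mul_pos (by positivity) h1ρ) (by positivity))
    gcongr
    nlinarith [mul_nonneg (pow_pos hσs 4).le (sq_nonneg ρs)]
end

section
/- For every distortion D with 0 < D ≤ σs², the lower bound does not exceed the separation upper bound: E_lb(D) ≤ E_sep^{ρs}(D). -/
lemma key_aux (σz ρz A r : ℝ) (hσz : 0 < σz) (hρz : |ρz| < 1)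
    (h1 : 1 ≤ r) (h2 : r ≤ A) :
    σz^2 * Real.log 2 * max (2 * ((1/2) * Real.logb 2 r)) ((1 + ρz) * ((1/2) * Real.logb 2 A)) ≤
      σz^2 * Real.log A := by
  have hr : 0 < r := lt_of_lt_of_le one_pos h1
  have hA1 : 1 ≤ A := le_trans h1 h2
  have hlr : Real.logb 2 r ≤ Real.logb 2 A :=
    Real.logb_le_logb_of_le one_lt_two hr h2
  have hlA : 0 ≤ Real.logb 2 A := Real.logb_nonneg one_lt_two hA1
  have hlog2 : (0:ℝ) < Real.log 2 := Real.log_pos one_lt_two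
  have hA : Real.log A = Real.log 2 * Real.logb 2 A := by
    rw [Real.logb]; field_simp
  rw [hA]
  refine le_trans ?_ (le_of_eq (mul_assoc _ _ _))
  have hz1 : ρz < 1 := (abs_lt.mp hρz).2
  have hz2 : -1 < ρz := (abs_lt.mp hρz).1
  have hpos : 0 < σz^2 * Real.log 2 := by positivity
  refine mul_le_mul_of_nonneg_left (max_le ?_ ?_) hpos.le
  · linarith
  · nlinarith

/-- For every distortion `D` with `0 < D ≤ σs²`, the lower bound does not exceed the
separation upper bound: `E_lb(D) ≤ E_sep^{ρs}(D)`. -/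
theorem stmt_3 (σs σz ρs ρz : ℝ) (hσs : 0 < σs) (hσz : 0 < σz)
    (hρs : |ρs| < 1) (hρz : |ρz| < 1)
    (R1 R12 Elb Esep_s : ℝ → ℝ)
    (hR1 : ∀ D, R1 D = (1/2) * Real.logb 2 (σs^2 / D))
    (hR12 : ∀ D, R12 D =
      if σs^2 * (1 - |ρs|) < D
      then (1/2) * Real.logb 2 (σs^2 * (1 + |ρs|) / (2*D - σs^2 * (1 - |ρs|)))
      else (1/2) * Real.logb 2 (σs^4 * (1 - ρs^2) / D^2))
    (hElb : ∀ D, Elb D = σz^2 * Real.log 2 * max (2 * R1 D) ((1 + ρz) * R12 D))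
    (hEs : ∀ D, Esep_s D =
      if σs^2 * (1 - |ρs|) < D
      then σz^2 * Real.log (σs^2 * (1 + |ρs|) / (2*D - σs^2 * (1 - |ρs|)))
      else σz^2 * Real.log (σs^4 * (1 - ρs^2) / D^2)) :
    ∀ D, 0 < D → D ≤ σs^2 → Elb D ≤ Esep_s D := by
  intro D hD hDle
  have habs : 0 ≤ |ρs| := abs_nonneg ρs
  have habs1 : |ρs| < 1 := hρs
  have h1 : 1 ≤ σs^2 / D := (one_le_div hD).mpr hDle
  rw [hElb, hEs, hR1, hR12]
  split_ifs with h
  · -- case σs²(1-|ρs|) < D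
    have hden : 0 < 2*D - σs^2 * (1 - |ρs|) := by linarith
    have h2 : σs^2 / D ≤ σs^2 * (1 + |ρs|) / (2*D - σs^2 * (1 - |ρs|)) := by
      rw [div_le_div_iff₀ hD hden]
      nlinarith [mul_nonneg (sq_nonneg σs) (mul_nonneg (sub_nonneg.mpr hDle) (sub_nonneg.mpr habs1.le))]
    exact key_aux σz ρz _ _ hσz hρz h1 h2
  · -- case D ≤ σs²(1-|ρs|)
    push_neg at h
    have h2 : σs^2 / D ≤ σs^4 * (1 - ρs^2) / D^2 := by
      rw [div_le_div_iff₀ hD (by positivity)]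
      have hsq : ρs^2 = |ρs|^2 := (sq_abs ρs).symm
      rw [hsq]
      nlinarith [mul_nonneg (sq_nonneg σs) (mul_nonneg (sub_nonneg.mpr h) hD.le),
        mul_nonneg (mul_nonneg (mul_nonneg (pow_nonneg hσs.le 4)
          (by linarith : (0:ℝ) ≤ 1 - |ρs|)) habs) hD.le]
    exact key_aux σz ρz _ _ hσz hρz h1 h2
end

section
/- One has 0 < D_th ≤ σs²; for every D with D_th ≤ D ≤ σs² the quantity D + (2−ρz)(D−σs²) + σs²·|ρs| is strictly positive (so the logarithm in E_OL is well defined); and E_OL(D) ≥ 0 for all D ∈ (0, σs²], with E_OL(D) = 0 if and only if D = σs². -/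
/-- One has `0 < D_th ≤ σs²`; for every `D` with `D_th ≤ D ≤ σs²` the quantity
`D + (2−ρz)(D−σs²) + σs²·|ρs|` is strictly positive; and `E_OL(D) ≥ 0` for all
`D ∈ (0, σs²]`, with `E_OL(D) = 0` if and only if `D = σs²`. -/
theorem stmt_6 (σs σz ρs ρz : ℝ) (hσs : 0 < σs) (hσz : 0 < σz)
    (hρs : |ρs| < 1) (hρz : |ρz| < 1)
    (Dth : ℝ) (hDth : Dth = σs^2 * (2 - ρz - |ρs|) / (2 - ρz))
    (EOL : ℝ → ℝ)
    (hEOL : ∀ D, EOL D =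
      if Dth ≤ D
      then (2 * σz^2 / (3 - ρz)) *
        Real.log (σs^2 * (1 + |ρs|) / (D + (2 - ρz) * (D - σs^2) + σs^2 * |ρs|))
      else 2 * σz^2 * (Real.log ((2 - ρz - |ρs|) * σs^2 / ((2 - ρz) * D))
        + (1 / (3 - ρz)) * Real.log ((2 - ρz) * (1 + |ρs|) / (2 - ρz - |ρs|)))) :
    (0 < Dth ∧ Dth ≤ σs^2) ∧
    (∀ D, Dth ≤ D → D ≤ σs^2 → 0 < D + (2 - ρz) * (D - σs^2) + σs^2 * |ρs|) ∧
    (∀ D, 0 < D → D ≤ σs^2 → 0 ≤ EOL D ∧ (EOL D = 0 ↔ D = σs^2)) := by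
  have ha0 : 0 ≤ |ρs| := abs_nonneg _
  have ha1 : |ρs| < 1 := hρs
  have hz1 : ρz < 1 := lt_of_abs_lt hρz
  have hc : (1:ℝ) < 2 - ρz := by linarith
  have hc0 : (0:ℝ) < 2 - ρz := by linarith
  have hca : (0:ℝ) < 2 - ρz - |ρs| := by linarith
  have hs2 : (0:ℝ) < σs^2 := by positivity
  have hDth0 : 0 < Dth := by
    rw [hDth]; positivity
  have hDths : Dth ≤ σs^2 := by
    rw [hDth, div_le_iff₀ hc0]
    nlinarith
  have key2 : ∀ D, Dth ≤ D → 0 < D + (2 - ρz) * (D - σs^2) + σs^2 * |ρs| := by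
    intro D hD
    rw [hDth, div_le_iff₀ hc0] at hD
    have hD0 : 0 < D := by nlinarith
    nlinarith
  refine ⟨⟨hDth0, hDths⟩, fun D hD _ => key2 D hD, fun D hD0 hDs => ?_⟩
  rw [hEOL D]
  by_cases h : Dth ≤ D
  · rw [if_pos h]
    have hden : 0 < D + (2 - ρz) * (D - σs^2) + σs^2 * |ρs| := key2 D h
    have hnum : 0 < σs^2 * (1 + |ρs|) := by positivity
    have hcoef : 0 < 2 * σz^2 / (3 - ρz) := by
      apply div_pos (by positivity); linarith
    have hratio1 : 1 ≤ σs^2 * (1 + |ρs|) / (D + (2 - ρz) * (D - σs^2) + σs^2 * |ρs|) := by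
      rw [le_div_iff₀ hden]; nlinarith
    constructor
    · exact mul_nonneg (le_of_lt hcoef) (Real.log_nonneg hratio1)
    · constructor
      · intro heq
        have hlog : Real.log (σs^2 * (1 + |ρs|) / (D + (2 - ρz) * (D - σs^2) + σs^2 * |ρs|)) = 0 := by
          rcases mul_eq_zero.mp heq with h1 | h1
          · exact absurd h1 (ne_of_gt hcoef)
          · exact h1
        rcases Real.log_eq_zero.mp hlog with h1 | h1 | h1
        · exact absurd h1 (ne_of_gt (div_pos hnum hden))
        · rw [div_eq_one_iff_eq (ne_of_gt hden)] at h1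
          nlinarith
        · nlinarith [div_pos hnum hden]
      · intro heq
        have h1 : σs^2 * (1 + |ρs|) / (D + (2 - ρz) * (D - σs^2) + σs^2 * |ρs|) = 1 := by
          rw [div_eq_one_iff_eq (ne_of_gt hden), heq]; ring
        rw [h1, Real.log_one, mul_zero]
  · rw [if_neg h]
    push_neg at h
    have hDne : D ≠ σs^2 := by
      intro heq; rw [heq] at h; linarith
    have hlog1 : 0 < Real.log ((2 - ρz - |ρs|) * σs^2 / ((2 - ρz) * D)) := by
      apply Real.log_pos
      rw [lt_div_iff₀ (by positivity)]
      rw [hDth] at h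
      have h' := (lt_div_iff₀ hc0).mp h
      nlinarith
    have hlog2 : 0 ≤ Real.log ((2 - ρz) * (1 + |ρs|) / (2 - ρz - |ρs|)) := by
      apply Real.log_nonneg
      rw [le_div_iff₀ hca]
      nlinarith
    have hcoef2 : 0 < 1 / (3 - ρz) := by
      apply div_pos one_pos; linarith
    have hpos : 0 < 2 * σz^2 * (Real.log ((2 - ρz - |ρs|) * σs^2 / ((2 - ρz) * D))
        + (1 / (3 - ρz)) * Real.log ((2 - ρz) * (1 + |ρs|) / (2 - ρz - |ρs|))) := by
      apply mul_pos (by positivity)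
      have := mul_nonneg (le_of_lt hcoef2) hlog2
      linarith
    exact ⟨le_of_lt hpos, by
      constructor
      · intro heq; exact absurd heq (ne_of_gt hpos)
      · intro heq; exact absurd heq hDne⟩
end

section
/- The function D ↦ E_OL(D) is strictly decreasing on (0, σs²]. -/
/-!
Both branches of `E_OL` are decreasing: each is a positive multiple of `log (N / g D)` plus a
constant, with `g` increasing and positive on its branch (`g D = (2 - ρz) D` below the
threshold, and the affine `g D = D_th + (3 - ρz) (D - D_th)` above it). At `D = D_th` the two
formulas agree, since there the first logarithm of the lower branch vanishes, so the branches
glue to a strictly decreasing function on `(0, ∞)`.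
-/

open Real Set

theorem StrictAntiOn.const_mul_of_pos {α : Type*} [Preorder α] {f : α → ℝ} {s : Set α} {c : ℝ}
    (hf : StrictAntiOn f s) (hc : 0 < c) : StrictAntiOn (fun x => c * f x) s :=
  fun _ hx _ hy hxy => mul_lt_mul_of_pos_left (hf hx hy hxy) hc

theorem strictAntiOn_log_const_div {α : Type*} [Preorder α] {g : α → ℝ} {s : Set α} {N : ℝ}
    (hN : 0 < N) (hg : StrictMonoOn g s) (hg_pos : ∀ x ∈ s, 0 < g x) :
    StrictAntiOn (fun x => log (N / g x)) s :=
  fun _ hx _ hy hxy => log_lt_log (div_pos hN (hg_pos _ hy))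
    (div_lt_div_of_pos_left hN (hg_pos _ hx) (hg hx hy hxy))

theorem strictAntiOn_ite_Ioi {α β : Type*} [LinearOrder α] [Preorder β] {L R : α → β} {a c : α}
    (hac : a < c) (hL : StrictAntiOn L (Ioc a c)) (hR : StrictAntiOn R (Ici c))
    (hLR : L c = R c) : StrictAntiOn (fun x => if c ≤ x then R x else L x) (Ioi a) := by
  rw [← Ioc_union_Ici_eq_Ioi hac]
  refine StrictAntiOn.union (c := c) ?_ ?_ ⟨right_mem_Ioc.2 hac, fun _ hx => hx.2⟩
    ⟨self_mem_Ici, fun _ hx => hx⟩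
  · refine hL.congr fun x hx => ?_
    rcases hx.2.lt_or_eq with hxc | rfl
    · simp only [if_neg (not_le.2 hxc)]
    · simp only [le_refl, if_true, hLR]
  · exact hR.congr fun x hx => by simp only [if_pos (mem_Ici.1 hx)]

theorem add_sub_mul_add_eq_threshold_add (σs ρs ρz D : ℝ) (hρz : ρz ≠ 2) :
    D + (2 - ρz) * (D - σs^2) + σs^2 * |ρs| = σs^2 * (2 - ρz - |ρs|) / (2 - ρz)
      + (3 - ρz) * (D - σs^2 * (2 - ρz - |ρs|) / (2 - ρz)) := by
  have : 2 - ρz ≠ 0 := sub_ne_zero.2 hρz.symm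
  field_simp
  ring

/-- The function `D ↦ E_OL(D)` is strictly decreasing on `(0, σs²]`. -/
theorem stmt_7 (σs σz ρs ρz : ℝ) (hσs : 0 < σs) (hσz : 0 < σz)
    (hρs : |ρs| < 1) (hρz : |ρz| < 1)
    (Dth : ℝ) (hDth : Dth = σs^2 * (2 - ρz - |ρs|) / (2 - ρz))
    (EOL : ℝ → ℝ)
    (hEOL : ∀ D, EOL D =
      if Dth ≤ D
      then (2 * σz^2 / (3 - ρz)) *
        Real.log (σs^2 * (1 + |ρs|) / (D + (2 - ρz) * (D - σs^2) + σs^2 * |ρs|))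
      else 2 * σz^2 * (Real.log ((2 - ρz - |ρs|) * σs^2 / ((2 - ρz) * D))
        + (1 / (3 - ρz)) * Real.log ((2 - ρz) * (1 + |ρs|) / (2 - ρz - |ρs|)))) :
    StrictAntiOn EOL (Set.Ioc 0 (σs^2)) := by
  have hρz1 : ρz < 1 := (abs_lt.1 hρz).2
  have ha : 0 < 2 - ρz := by linarith
  have har : 0 < 2 - ρz - |ρs| := by linarith
  have hs : 0 < σs^2 := by positivity
  have hDth0 : 0 < Dth := hDth ▸ div_pos (mul_pos hs har) ha
  have hdenom := fun D => hDth ▸ add_sub_mul_add_eq_threshold_add σs ρs ρz D (by linarith)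
  have hR := (strictAntiOn_log_const_div (s := Ici Dth)
    (by positivity : 0 < σs^2 * (1 + |ρs|)) (g := fun D => D + (2 - ρz) * (D - σs^2) + σs^2 * |ρs|)
    (fun x _ y _ hxy => by simp only [hdenom]; nlinarith)
    (fun x hx => by simp only [hdenom]; nlinarith [mem_Ici.1 hx])).const_mul_of_pos
    (div_pos (by positivity) (by linarith) : 0 < 2 * σz^2 / (3 - ρz))
  have hL := ((strictAntiOn_log_const_div (s := Ioc 0 Dth) (mul_pos har hs)
    (g := fun D => (2 - ρz) * D) (fun x _ y _ hxy => by nlinarith)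
    (fun x hx => mul_pos ha hx.1)).add_const
    ((1 / (3 - ρz)) * log ((2 - ρz) * (1 + |ρs|) / (2 - ρz - |ρs|)))).const_mul_of_pos
    (by positivity : 0 < 2 * σz^2)
  have hLR : (2 - ρz - |ρs|) * σs^2 / ((2 - ρz) * Dth) = 1
      ∧ σs^2 * (1 + |ρs|) / (Dth + (2 - ρz) * (Dth - σs^2) + σs^2 * |ρs|)
        = (2 - ρz) * (1 + |ρs|) / (2 - ρz - |ρs|) := by
    rw [hdenom, sub_self, mul_zero, add_zero, hDth]
    constructor <;> field_simp
  rw [funext hEOL]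
  refine (strictAntiOn_ite_Ioi hDth0 hL hR ?_).mono Ioc_subset_Ioi_self
  simp only [hLR, log_one]
  ring
end

section
/- Fix a distortion D with 0 < D < σs². Writing E_OL(D; ρs, ρz) to display the dependence on the correlations, the ratio E_sep^{ρz}(D)/E_OL(D; ρs, ρz) → 2 as (ρs, ρz) → (1, 1) with ρs, ρz ∈ (0, 1); i.e., in this limit the separation scheme ignoring the source correlation requires asymptotically twice the energy of the Ozarow–Leung scheme. -/
/-- Fix a distortion `D` with `0 < D < σs²`. Then the ratio
`E_sep^{ρz}(D) / E_OL(D; ρs, ρz) → 2` as `(ρs, ρz) → (1, 1)` with `ρs, ρz ∈ (0, 1)`. -/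
theorem stmt_13 (σs σz : ℝ) (hσs : 0 < σs) (hσz : 0 < σz)
    (D : ℝ) (hD0 : 0 < D) (hD : D < σs^2)
    (Esep_z : ℝ) (hEz : Esep_z = 2 * σz^2 * Real.log (σs^2 / D))
    (EOL : ℝ → ℝ → ℝ)
    (hEOL : ∀ ρs ρz, EOL ρs ρz =
      if σs^2 * (2 - ρz - |ρs|) / (2 - ρz) ≤ D
      then (2 * σz^2 / (3 - ρz)) *
        Real.log (σs^2 * (1 + |ρs|) / (D + (2 - ρz) * (D - σs^2) + σs^2 * |ρs|))
      else 2 * σz^2 * (Real.log ((2 - ρz - |ρs|) * σs^2 / ((2 - ρz) * D))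
        + (1 / (3 - ρz)) * Real.log ((2 - ρz) * (1 + |ρs|) / (2 - ρz - |ρs|)))) :
    ∀ ε > 0, ∃ δ > 0, ∀ ρs ρz : ℝ,
      1 - δ < ρs → ρs < 1 → 1 - δ < ρz → ρz < 1 →
      |Esep_z / EOL ρs ρz - 2| < ε := by
  intro ε hε
  have hσs2 : 0 < σs^2 := by positivity
  have hDs : (1:ℝ) < σs^2 / D := (one_lt_div hD0).2 hD
  have hLpos : 0 < Real.log (σs^2 / D) := Real.log_pos hDs
  set F : ℝ × ℝ → ℝ := fun p =>
    Esep_z / ((2 * σz^2 / (3 - p.2)) *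
      Real.log (σs^2 * (1 + |p.1|) / (D + (2 - p.2) * (D - σs^2) + σs^2 * |p.1|))) with hF
  have harg11 : σs^2 * (1 + |(1:ℝ)|) / (D + (2 - (1:ℝ)) * (D - σs^2) + σs^2 * |(1:ℝ)|)
      = σs^2 / D := by
    rw [abs_one]
    rw [show D + (2 - (1:ℝ)) * (D - σs^2) + σs^2 * 1 = 2 * D by ring]
    rw [show σs^2 * (1 + (1:ℝ)) = 2 * σs^2 by ring]
    rw [mul_div_mul_left _ _ (by norm_num : (2:ℝ) ≠ 0)]
  have hF11 : F (1, 1) = 2 := by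
    simp only [hF]
    rw [harg11, hEz, show (3:ℝ) - 1 = 2 by norm_num]
    field_simp
  have hcont : ContinuousAt F (1, 1) := by
    apply ContinuousAt.div continuousAt_const
    · apply ContinuousAt.mul
      · exact ContinuousAt.div continuousAt_const
          ((continuous_const.sub continuous_snd).continuousAt) (by norm_num)
      · apply ContinuousAt.log
        · apply ContinuousAt.div
          · exact (continuous_const.mul (continuous_const.add
              (continuous_abs.comp continuous_fst))).continuousAt
          · exact ((continuous_const.add (((continuous_const.sub continuous_snd)).mul
              continuous_const)).add
              (continuous_const.mul (continuous_abs.comp continuous_fst))).continuousAt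
          · show D + (2 - (1:ℝ)) * (D - σs^2) + σs^2 * |(1:ℝ)| ≠ 0
            rw [abs_one]; nlinarith
        · rw [harg11]; positivity
    · rw [show ((1:ℝ),(1:ℝ)).2 = 1 from rfl, harg11]
      rw [show (3:ℝ) - 1 = 2 by norm_num]
      have : 2 * σz^2 / 2 = σz^2 := by ring
      rw [this]
      positivity
  have htend : Filter.Tendsto F (nhds (1,1)) (nhds 2) := hF11 ▸ hcont
  obtain ⟨δ₀, hδ₀, hball⟩ := Metric.tendsto_nhds_nhds.mp htend ε hε
  refine ⟨min (min δ₀ (1/2)) (D / (2 * σs^2)), by positivity, ?_⟩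
  intro ρs ρz h1 h2 h3 h4
  set δ := min (min δ₀ (1/2)) (D / (2 * σs^2)) with hδ
  have hδle1 : δ ≤ δ₀ := le_trans (min_le_left _ _) (min_le_left _ _)
  have hδle2 : δ ≤ 1/2 := le_trans (min_le_left _ _) (min_le_right _ _)
  have hδle3 : δ ≤ D / (2 * σs^2) := min_le_right _ _
  have hρs0 : 0 < ρs := by linarith
  have habs : |ρs| = ρs := abs_of_pos hρs0
  have hρz2 : (1:ℝ) < 2 - ρz := by linarith
  -- the if condition holds
  have hcond : σs^2 * (2 - ρz - |ρs|) / (2 - ρz) ≤ D := by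
    rw [habs, div_le_iff₀ (by linarith : (0:ℝ) < 2 - ρz)]
    have h5 : 2 - ρz - ρs < 2 * δ := by linarith
    have h6 : σs^2 * (2 * δ) ≤ D := by
      have := (le_div_iff₀ (by positivity : (0:ℝ) < 2 * σs^2)).mp hδle3
      nlinarith
    nlinarith
  rw [hEOL, if_pos hcond]
  have hdist : dist (ρs, ρz) ((1:ℝ), (1:ℝ)) < δ₀ := by
    rw [Prod.dist_eq]
    simp only [Real.dist_eq]
    apply max_lt
    · rw [abs_of_nonpos (by linarith)]; linarith
    · rw [abs_of_nonpos (by linarith)]; linarith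
  have := hball hdist
  rw [Real.dist_eq] at this
  exact this
end
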